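/- If the infinite measure preserving system (X,𝒜,μ,T) has the (P) property, then T has infinite ergodic index: for every n ≥ 1, the Cartesian power T^{×n} is ergodic on (X^n, μ^{⊗n}). -/

import Mathlib

open MeasureTheory ENNReal NNReal Set Bornology

noncomputable section

namespace PPP

variable {X Y Ω : Type*} [MeasurableSpace X] [MeasurableSpace Y] [MeasurableSpace Ω]

/-- A measure is *boundedly finite* if it gives finite mass to every bounded set. -/
def BddFin [Bornology X] (ξ : Measure X) : Prop :=
  ∀ B : Set X, IsBounded B → ξ B < ⊤

/-- A *simple counting measure*: a sum of Dirac masses on a countable set of distinct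
points having finitely many points in every bounded set. -/
def IsSimpleCounting [Bornology X] (ξ : Measure X) : Prop :=
  ∃ s : Set X, s.Countable ∧ (∀ B : Set X, IsBounded B → (s ∩ B).Finite) ∧
    ∀ A : Set X, MeasurableSet A → ξ A = (s ∩ A).encard

/-- A counting measure (no local-finiteness requirement; used on marked spaces). -/
def IsCountingOn (ξ : Measure Y) : Prop :=
  ∃ s : Set Y, s.Countable ∧ ∀ A : Set Y, MeasurableSet A → ξ A = (s ∩ A).encard

/-- A discrete (purely atomic) measure: concentrated on a countable set. -/
def IsDiscreteM (ξ : Measure X) : Prop := ∃ s : Set X, s.Countable ∧ ξ sᶜ = 0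

/-- A continuous (atomless) measure. -/
def IsContinuousM (ξ : Measure X) : Prop := ∀ x : X, ξ {x} = 0

/-- An `ℝ≥0∞`-valued random variable has the Poisson distribution with parameter `r`. -/
def HasPoissonDist (P : Measure Ω) (f : Ω → ℝ≥0∞) (r : ℝ≥0∞) : Prop :=
  ∀ n : ℕ, P {ω | f ω = n} =
    ENNReal.ofReal (Real.exp (-r.toReal) * r.toReal ^ n / n.factorial)

/-- `N` is a Poisson point process of intensity `ν`: counts over finitely many disjoint
sets of finite positive `ν`-measure are independent Poisson random variables. -/
def IsPoissonPP (P : Measure Ω) (N : Ω → Measure Y) (ν : Measure Y) : Prop :=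
  ∀ (k : ℕ) (A : Fin k → Set Y), (∀ i, MeasurableSet (A i)) →
    (∀ i, 0 < ν (A i)) → (∀ i, ν (A i) < ⊤) →
    Pairwise (Function.onFun Disjoint A) →
    ProbabilityTheory.iIndepFun (fun i ω => N ω (A i)) P ∧
    ∀ i, HasPoissonDist P (fun ω => N ω (A i)) (ν (A i))

/-- A `T`-random measure on the system `(Ω, P, S)`. -/
structure TRM [Bornology X] (μ : Measure X) (T : X → X) (P : Measure Ω) (S : Ω → Ω) where
  toFun : Ω → Measure X
  measurable' : Measurable toFun
  bddFin' : ∀ᵐ ω ∂P, BddFin (toFun ω)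
  null' : ∀ A : Set X, MeasurableSet A → μ A = 0 → ∀ᵐ ω ∂P, toFun ω A = 0
  equivariant' : ∀ᵐ ω ∂P, toFun (S ω) = (toFun ω).map T

/-- A `T`-point process: a `T`-random measure whose values are simple counting measures. -/
def TRM.IsPointProc [Bornology X] {μ : Measure X} {T : X → X} {P : Measure Ω} {S : Ω → Ω}
    (N : TRM μ T P S) : Prop :=
  ∀ᵐ ω ∂P, IsSimpleCounting (N.toFun ω)

/-- Moments of order `n`. -/
def HasMoment [Bornology X] (P : Measure Ω) (N : Ω → Measure X) (n : ℕ) : Prop :=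
  ∀ A : Set X, IsBounded A → MeasurableSet A → ∫⁻ ω, (N ω A) ^ n ∂P < ⊤

/-- Moments of all orders. -/
def HasAllMoments [Bornology X] (P : Measure Ω) (N : Ω → Measure X) : Prop :=
  ∀ n : ℕ, HasMoment P N n

/-- The value of the measure `m_π` on the rectangle `A 0 × ⋯ × A (n-1)`. -/
def mPartVal (μ : Measure X) {n : ℕ} (π : Finpartition (Finset.univ : Finset (Fin n)))
    (A : Fin n → Set X) : ℝ≥0∞ :=
  ∏ Q ∈ π.parts, μ (⋂ i ∈ Q, A i)

/-- The measure `m_π` on `X^n`. -/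
def mPartMeasure (μ : Measure X) {n : ℕ} (π : Finpartition (Finset.univ : Finset (Fin n))) :
    Measure (Fin n → X) :=
  Measure.map (fun y : {Q // Q ∈ π.parts} → X =>
      fun i => y ⟨π.part i, π.part_mem.2 (Finset.mem_univ i)⟩)
    (Measure.pi fun _ => μ)

/-- The `n`-fold Cartesian power of a map. -/
def piMap (T : X → X) (n : ℕ) : (Fin n → X) → (Fin n → X) := fun x i => T (x i)

/-- `T` has infinite ergodic index: all its Cartesian powers are ergodic. -/
def InfErgIndex (μ : Measure X) (T : X → X) : Prop :=
  ∀ n : ℕ, 1 ≤ n → Ergodic (piMap T n) (Measure.pi fun _ : Fin n => μ)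

/-- The map `(x_i) ↦ (T^{k_i} x_i)` on `X^n`. -/
def zpowPiMap (T : X ≃ X) {n : ℕ} (k : Fin n → ℤ) : (Fin n → X) → (Fin n → X) :=
  fun x i => ((T : Equiv.Perm X) ^ (k i)) (x i)

/-- Property (P): every boundedly finite `T^{×n}`-invariant measure on `X^n` with marginals
absolutely continuous with respect to `μ` is conservative, and it decomposes as a countable
combination of ergodic measures of the form `(T^{k₁}×⋯×T^{k_n})_* m_π`. -/
def PropertyP [MetricSpace X] (μ : Measure X) (T : X ≃ X) : Prop :=
  ∀ n : ℕ, 1 ≤ n → ∀ σ : Measure (Fin n → X),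
    (∀ B : Set (Fin n → X), IsBounded B → σ B < ⊤) →
    (∀ i : Fin n, Measure.map (fun x => x i) σ ≪ μ) →
    MeasurePreserving (piMap (⇑T) n) σ σ →
    Conservative (piMap (⇑T) n) σ ∧
    ∃ (c : ℕ → ℝ≥0∞) (πs : ℕ → Finpartition (Finset.univ : Finset (Fin n)))
      (ks : ℕ → Fin n → ℤ),
      (∀ j, c j ≠ 0 → Ergodic (piMap (⇑T) n)
          (Measure.map (zpowPiMap T (ks j)) (mPartMeasure μ (πs j)))) ∧
      σ = Measure.sum (fun j =>
            c j • Measure.map (zpowPiMap T (ks j)) (mPartMeasure μ (πs j)))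

/-- The space `ℓ₁⁺(ℤ)` of summable families of nonnegative reals indexed by `ℤ`. -/
abbrev L1pos : Type := {a : ℤ → ℝ // (∀ k, 0 ≤ a k) ∧ Summable a}

/-- The cluster random measure built from a counting measure on `X × ℓ₁⁺(ℤ)`:
each point `(x, (a_k)_k)` contributes the measure `Σ_k a_k δ_{T^k x}`. -/
def cluster (T : X ≃ X) (η : Measure (X × L1pos)) : Measure X :=
  η.bind fun p => Measure.sum fun k : ℤ =>
    (Real.toNNReal (p.2.1 k)) • Measure.dirac (((T : Equiv.Perm X) ^ k) p.1)

/-- Infinite divisibility of a probability measure on the space of measures on `X`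
(with respect to addition of measures). -/
def IsInfDiv (m : Measure (Measure X)) : Prop :=
  ∀ k : ℕ, 1 ≤ k → ∃ mk : Measure (Measure X), ∃ _h : IsProbabilityMeasure mk,
    m = Measure.map (fun v : Fin k → Measure X => ∑ i, v i) (Measure.pi fun _ : Fin k => mk)

/-- Two point processes are dissociated. -/
def Dissociated (P : Measure Ω) (S : Ω ≃ Ω) (N₁ N₂ : Ω → Measure X) : Prop :=
  ∀ᵐ ω ∂P, ∀ k : ℤ, ∀ x : X, N₁ ω {x} = 0 ∨ N₂ (((S : Equiv.Perm Ω) ^ k) ω) {x} = 0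

/-!
Apply property (P) to `σ = μ^{⊗n}` itself. A component `(T^{k₁}×⋯×T^{k_n})_* m_π` whose
partition `π` puts two indices `i ≠ j` in one block lives on the graph
`{x | x i = T^{k_i - k_j} (x j)}`, which is `μ^{⊗n}`-null since `μ` is atomless; so it cannot
carry positive weight below `σ`. A component with positive weight therefore has the discrete
partition, and is `σ` itself because `T` preserves `μ`. Hence `σ` is one of the ergodic
components.
-/

open Function

theorem BddFin.isLocallyFiniteMeasure {X : Type*} [MeasurableSpace X] [PseudoMetricSpace X]
    {μ : Measure X} (hμ : BddFin μ) : IsLocallyFiniteMeasure μ :=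
  ⟨fun x => ⟨Metric.ball x 1, Metric.ball_mem_nhds x one_pos, hμ _ Metric.isBounded_ball⟩⟩

theorem BddFin.pi {ι X : Type*} [Fintype ι] [MeasurableSpace X] [Bornology X] {μ : Measure X}
    [SigmaFinite μ] (hμ : BddFin μ) : BddFin (Measure.pi fun _ : ι => μ) := by
  intro B hB
  calc Measure.pi (fun _ => μ) B ≤ Measure.pi (fun _ => μ) (univ.pi fun i => eval i '' B) :=
        measure_mono (subset_pi_eval_image _ _)
    _ = ∏ i, μ (eval i '' B) := Measure.pi_pi _ _
    _ < ⊤ := ENNReal.prod_lt_top fun i _ => hμ _ (forall_isBounded_image_eval_iff.2 hB i)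

theorem measure_pi_ne_zero {ι : Type*} [Fintype ι] {X : ι → Type*} [∀ i, MeasurableSpace (X i)]
    {μ : ∀ i, Measure (X i)} [∀ i, SigmaFinite (μ i)] (hμ : ∀ i, μ i ≠ 0) :
    Measure.pi μ ≠ 0 := by
  rw [← Measure.measure_univ_ne_zero, Measure.pi_univ]
  exact Finset.prod_ne_zero_iff.2 fun i _ => Measure.measure_univ_ne_zero.2 (hμ i)

theorem measure_pi_graph_null {ι X : Type*} [Fintype ι]
    [MeasurableSpace X] [MeasurableEq X] (μ : Measure X) [SigmaFinite μ] [NullSingletonClass μ]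
    {i j : ι} (hij : i ≠ j) {h : X → X} (hh : Measurable h) :
    Measure.pi (fun _ : ι => μ) {x | x i = h (x j)} = 0 := by
  classical
  -- Fubini over the coordinates `≠ i`: every section is a singleton in coordinate `i`.
  let e := MeasurableEquiv.piEquivPiSubtypeProd (fun _ : ι => X) (· ≠ i)
  have hG : {x : ι → X | x i = h (x j)} =
      e ⁻¹' {p | p.2 ⟨i, not_not.2 rfl⟩ = h (p.1 ⟨j, hij.symm⟩)} := rfl
  rw [hG, (measurePreserving_piEquivPiSubtypeProd _ _).measure_preimage_equiv,
    Measure.measure_prod_null (measurableSet_eq_fun (by fun_prop) (by fun_prop))]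
  refine Filter.Eventually.of_forall fun a => ?_
  exact Measure.pi_eval_preimage_null (fun _ => μ)
    (measure_singleton (h (a ⟨j, hij.symm⟩)))

theorem measurable_perm_zpow {X : Type*} [MeasurableSpace X] {T : Equiv.Perm X}
    (hT : Measurable T) (hT' : Measurable T.symm) : ∀ m : ℤ, Measurable ⇑(T ^ m)
  | (m : ℕ) => by simpa only [zpow_natCast, Equiv.Perm.coe_pow] using hT.iterate m
  | .negSucc m => by
    rw [zpow_negSucc, ← inv_pow, Equiv.Perm.coe_pow]
    exact hT'.iterate (m + 1)

theorem measurePreserving_perm_zpow {X : Type*} [MeasurableSpace X] {μ : Measure X}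
    {T : Equiv.Perm X} (hT : MeasurePreserving T μ μ) (hT' : Measurable T.symm) :
    ∀ m : ℤ, MeasurePreserving ⇑(T ^ m) μ μ
  | (m : ℕ) => by simpa only [zpow_natCast, Equiv.Perm.coe_pow] using hT.iterate m
  | .negSucc m => by
    rw [zpow_negSucc, ← inv_pow, Equiv.Perm.coe_pow]
    exact (hT.symm ⟨T, hT.measurable, hT'⟩).iterate (m + 1)

section Partition

variable {X : Type*} [MeasurableSpace X] (μ : Measure X) {n : ℕ}
  (π : Finpartition (Finset.univ : Finset (Fin n)))

theorem measurable_mPartMeasure_embedding :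
    Measurable fun (y : {Q // Q ∈ π.parts} → X) (i : Fin n) =>
      y ⟨π.part i, π.part_mem.2 (Finset.mem_univ i)⟩ :=
  measurable_pi_lambda _ fun _ => measurable_pi_apply _

theorem mPartMeasure_ne_zero [SigmaFinite μ] (hμ : μ ≠ 0) : mPartMeasure μ π ≠ 0 :=
  (Measure.map_ne_zero_iff (measurable_mPartMeasure_embedding π).aemeasurable).2
    (measure_pi_ne_zero fun _ => hμ)

theorem ae_mPartMeasure_eq [MeasurableEq X] {i j : Fin n} (hij : π.part i = π.part j) :
    ∀ᵐ x ∂mPartMeasure μ π, x i = x j := by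
  rw [mPartMeasure, ae_map_iff (measurable_mPartMeasure_embedding π).aemeasurable
    (measurableSet_eq_fun (measurable_pi_apply i) (measurable_pi_apply j))]
  exact Filter.Eventually.of_forall fun y => congrArg y (Subtype.ext hij)

theorem mPartMeasure_eq_pi [SigmaFinite μ] (hπ : Injective π.part) :
    mPartMeasure μ π = Measure.pi fun _ => μ := by
  let e : Fin n → {Q // Q ∈ π.parts} := fun i => ⟨π.part i, π.part_mem.2 (Finset.mem_univ i)⟩
  have he : Bijective e := by
    refine ⟨fun i j hij => hπ (congrArg Subtype.val hij), fun ⟨Q, hQ⟩ => ?_⟩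
    obtain ⟨i, hi⟩ := π.nonempty_of_mem_parts hQ
    exact ⟨i, Subtype.ext (π.part_eq_of_mem hQ hi)⟩
  exact (measurePreserving_arrowCongr' (fun _ => μ) (fun _ => μ)
    (Equiv.ofBijective e he).symm (.refl X) fun _ => .id μ).map_eq

end Partition

section Component

variable {X : Type*} [MeasurableSpace X] {μ : Measure X} {T : X ≃ X} {n : ℕ}

theorem measurable_zpowPiMap (hT : Measurable T) (hT' : Measurable T.symm) (k : Fin n → ℤ) :
    Measurable (zpowPiMap T k) :=
  measurable_pi_lambda _ fun i => (measurable_perm_zpow hT hT' (k i)).comp (measurable_pi_apply i)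

theorem measurePreserving_zpowPiMap [SigmaFinite μ] (hT : MeasurePreserving T μ μ)
    (hT' : Measurable T.symm) (k : Fin n → ℤ) :
    MeasurePreserving (zpowPiMap T k) (Measure.pi fun _ => μ) (Measure.pi fun _ => μ) :=
  measurePreserving_pi _ _ fun i => measurePreserving_perm_zpow hT hT' (k i)

theorem ae_map_zpowPiMap_mPartMeasure [MeasurableEq X] (hT : Measurable T)
    (hT' : Measurable T.symm) {π : Finpartition (Finset.univ : Finset (Fin n))} (k : Fin n → ℤ)
    {i j : Fin n} (hij : π.part i = π.part j) :
    ∀ᵐ x ∂(mPartMeasure μ π).map (zpowPiMap T k),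
      x i = ((T : Equiv.Perm X) ^ (k i - k j)) (x j) := by
  refine (ae_map_iff (measurable_zpowPiMap hT hT' k).aemeasurable (measurableSet_eq_fun
    (measurable_pi_apply i) ((measurable_perm_zpow hT hT' (k i - k j)).comp
      (measurable_pi_apply j)))).2 ?_
  filter_upwards [ae_mPartMeasure_eq μ π hij] with y hy
  simp only [zpowPiMap, Function.comp_apply, hy, ← Equiv.Perm.mul_apply, ← zpow_add,
    sub_add_cancel]

theorem map_zpowPiMap_mPartMeasure_eq_pi [MeasurableEq X] [SigmaFinite μ] [NullSingletonClass μ]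
    (hμ : μ ≠ 0) (hT : MeasurePreserving T μ μ) (hT' : Measurable T.symm)
    {π : Finpartition (Finset.univ : Finset (Fin n))} {k : Fin n → ℤ} {c : ℝ≥0∞} (hc : c ≠ 0)
    (hle : c • (mPartMeasure μ π).map (zpowPiMap T k) ≤ Measure.pi fun _ => μ) :
    (mPartMeasure μ π).map (zpowPiMap T k) = Measure.pi fun _ => μ := by
  by_cases hπ : Injective π.part
  · rw [mPartMeasure_eq_pi μ π hπ]
    exact (measurePreserving_zpowPiMap hT hT' k).map_eq
  obtain ⟨i, j, hij, hne⟩ := not_injective_iff.1 hπ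
  have hac : (mPartMeasure μ π).map (zpowPiMap T k) ≪ Measure.pi fun _ => μ :=
    (Measure.absolutelyContinuous_smul hc).trans (Measure.absolutelyContinuous_of_le hle)
  have hoff : ∀ᵐ x ∂(mPartMeasure μ π).map (zpowPiMap T k),
      x i ≠ ((T : Equiv.Perm X) ^ (k i - k j)) (x j) :=
    hac.ae_le (measure_eq_zero_iff_ae_notMem.1
      (measure_pi_graph_null μ hne (measurable_perm_zpow hT.measurable hT' _)))
  refine absurd (ae_eq_bot.1 (Filter.eventually_false_iff_eq_bot.1 ?_))
    ((Measure.map_ne_zero_iff (measurable_zpowPiMap hT.measurable hT' k).aemeasurable).2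
      (mPartMeasure_ne_zero μ π hμ))
  filter_upwards [ae_map_zpowPiMap_mPartMeasure hT.measurable hT' k hij, hoff] with x hon hoff
  exact hoff hon

end Component

theorem stmt16_general
    {X : Type*} [MeasurableSpace X] [MetricSpace X] [BorelSpace X]
    [TopologicalSpace.SeparableSpace X]
    (μ : Measure X) (hμbdd : BddFin μ) (hμcont : IsContinuousM μ) (hμinf : μ Set.univ = ⊤)
    (T : X ≃ X) (hTmeas' : Measurable ⇑T.symm)
    (hT : MeasurePreserving ⇑T μ μ)
    (hP : PropertyP μ T) :
    InfErgIndex μ ⇑T := by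
  -- `X` is second countable, so this makes `μ` σ-finite
  have := hμbdd.isLocallyFiniteMeasure
  have : NullSingletonClass μ := ⟨hμcont⟩
  have hμ : μ ≠ 0 := fun h => by simp [h] at hμinf
  intro n hn
  obtain ⟨-, c, πs, ks, hErg, hσ⟩ := hP n hn _ hμbdd.pi
    (fun i => (Measure.quasiMeasurePreserving_eval _ i).absolutelyContinuous)
    (measurePreserving_pi _ _ fun _ => hT)
  obtain ⟨j, hj⟩ : ∃ j, c j ≠ 0 := by
    by_contra! hc
    exact measure_pi_ne_zero (fun _ => hμ) (by rw [hσ]; simp [hc])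
  rw [← map_zpowPiMap_mPartMeasure_eq_pi hμ hT hTmeas' hj (hσ ▸ Measure.le_sum _ j)]
  exact hErg j hj

/-- Property (P) implies infinite ergodic index. -/
theorem stmt16
    {X : Type*} [MeasurableSpace X] [MetricSpace X] [BorelSpace X]
    [TopologicalSpace.SeparableSpace X] [CompleteSpace X]
    (μ : Measure X) (hμbdd : BddFin μ) (hμcont : IsContinuousM μ) (hμinf : μ Set.univ = ⊤)
    (T : X ≃ X) (hTmeas : Measurable ⇑T) (hTmeas' : Measurable ⇑T.symm)
    (hT : MeasurePreserving ⇑T μ μ)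
    (hP : PropertyP μ T) :
    InfErgIndex μ ⇑T :=
  stmt16_general μ hμbdd hμcont hμinf T hTmeas' hT hP

end PPP
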